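/- arXiv:1306.6900 — 8 statements merged into one kernel-verified Lean document; each statement's English description precedes it below -/
import Mathlib

section
/- Let f : ℝ → ℝ, x₀ ∈ ℝ and L ∈ ℝ. Then f is differentiable at x₀ with derivative L if and only if the following nonstandard condition holds: for every positive infinitesimal hyperreal r and every hyperreal v such that v/r is finite, the quotient (*f(x₀ + v) − f(x₀) − L·v)/r is infinitesimal. (This is the precise meaning, in dimension one, of '*f restricted to the r-module at x₀ is r-almost affine at x₀, stably for all positive infinitesimals r, with linear part having r-standard part L'.) -/
open Hyperreal Filter

/-- The canonical hyperreal extension `*f : ℝ* → ℝ*` of `f : ℝ → ℝ` (germ-map lift). -/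
noncomputable def hyperExt (f : ℝ → ℝ) : ℝ* → ℝ* := fun x => Filter.Germ.map f x

/-- A hyperreal is finite (nearstandard) if it is bounded in absolute value by some natural. -/
def HFinite (x : ℝ*) : Prop := ∃ n : ℕ, |x| < (n : ℝ*)

open Asymptotics Topology

/-!
Read a hyperreal through a representing sequence `u` along the hyperfilter: `ofSeq u` is
infinitesimal iff `u → 0` there, and finite iff `u = O(1)` there. If `f(x₀ + h) - f x₀ - L h`
is `o(h)` and `v = O(r)` with `r → 0`, composing the two estimates gives `o(r)`. Conversely, a
limit along a countably generated filter is detected by sequences tending to it, and already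
along the hyperfilter; for a sequence `t → 0` with `t ≠ 0`, the choice `v = t`, `r = |t|`
turns the hypothesis into `|slope f x₀ (x₀ + t) - L| → 0`.
-/

theorem infinitesimal_ofSeq_iff {u : ℕ → ℝ} :
    Infinitesimal (ofSeq u) ↔ Tendsto u (hyperfilter ℕ) (𝓝 0) :=
  isSt_ofSeq_iff_tendsto

theorem hFinite_ofSeq_iff {u : ℕ → ℝ} :
    HFinite (ofSeq u) ↔ u =O[hyperfilter ℕ] (fun _ => (1 : ℝ)) := by
  rw [isBigO_iff]
  constructor
  · rintro ⟨n, hn⟩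
    refine ⟨n, (ofSeq_lt_ofSeq (f := fun k => |u k|) (g := fun _ => (n : ℝ))).1 hn |>.mono
      fun k hk => ?_⟩
    simpa only [Real.norm_eq_abs, norm_one, mul_one] using hk.le
  · rintro ⟨c, hc⟩
    refine ⟨⌊c⌋₊ + 1, ofSeq_lt_ofSeq.2 (hc.mono fun k hk => ?_)⟩
    rw [Real.norm_eq_abs, norm_one, mul_one] at hk
    push_cast
    exact hk.trans_lt (Nat.lt_floor_add_one c)

theorem Filter.tendsto_of_seq_tendsto_hyperfilter {α β : Type*} {k : Filter α} {l : Filter β}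
    [k.IsCountablyGenerated] {g : α → β}
    (h : ∀ t : ℕ → α, Tendsto t atTop k → Tendsto (g ∘ t) (hyperfilter ℕ) l) :
    Tendsto g k l := by
  by_contra hg
  obtain ⟨s, hs, hfreq⟩ := not_tendsto_iff_exists_frequently_notMem.1 hg
  obtain ⟨t, ht, hts⟩ := frequently_iff_seq_forall.1 hfreq
  obtain ⟨n, hn⟩ := ((h t ht).eventually_mem hs).exists
  exact hts n hn

theorem Asymptotics.IsLittleO.infinitesimal_hyperExt_div {g : ℝ → ℝ}
    (hg : g =o[𝓝 0] fun h => h) {r v : ℝ*} (hr : 0 < r) (hri : Infinitesimal r)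
    (hv : HFinite (v / r)) : Infinitesimal (hyperExt g v / r) := by
  obtain ⟨rs, rfl⟩ := ofSeq_surjective r
  obtain ⟨vs, rfl⟩ := ofSeq_surjective v
  have hrs : ∀ᶠ n in hyperfilter ℕ, 0 < rs n := ofSeq_lt_ofSeq.1 hr
  have hrs0 : Tendsto rs (hyperfilter ℕ) (𝓝 0) := infinitesimal_ofSeq_iff.1 hri
  have hvr : vs =O[hyperfilter ℕ] rs := by
    refine ((hFinite_ofSeq_iff (u := fun n => vs n / rs n)).1 hv |>.mul (isBigO_refl rs _)).congr'
      (hrs.mono fun n hn => div_mul_cancel₀ _ hn.ne') (Eventually.of_forall fun n => one_mul _)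
  have hvs0 : Tendsto vs (hyperfilter ℕ) (𝓝 0) := hvr.trans_tendsto hrs0
  exact infinitesimal_ofSeq_iff.2 ((hg.comp_tendsto hvs0).trans_isBigO hvr).tendsto_div_nhds_zero

theorem tendsto_div_nhdsNE_zero_of_forall_infinitesimal {g : ℝ → ℝ}
    (H : ∀ r : ℝ*, 0 < r → Infinitesimal r →
      ∀ v : ℝ*, HFinite (v / r) → Infinitesimal (hyperExt g v / r)) :
    Tendsto (fun t => g t / t) (𝓝[≠] 0) (𝓝 0) := by
  refine tendsto_of_seq_tendsto_hyperfilter fun t ht => ?_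
  obtain ⟨ht0, htne⟩ := tendsto_nhdsWithin_iff.1 (ht.mono_left Nat.hyperfilter_le_atTop)
  have hr : (0 : ℝ*) < ofSeq fun n => |t n| :=
    ofSeq_lt_ofSeq.2 (htne.mono fun n hn => abs_pos.2 hn)
  have hv : HFinite (ofSeq t / ofSeq fun n => |t n|) :=
    hFinite_ofSeq_iff.2 (IsBigO.of_bound 1 (Eventually.of_forall fun n => by
      simpa only [Real.norm_eq_abs, norm_one, mul_one, abs_div, abs_abs]
        using div_self_le_one |t n|))
  have hri : Infinitesimal (ofSeq fun n => |t n|) :=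
    infinitesimal_ofSeq_iff.2 (by simpa only [abs_zero] using ht0.abs)
  have hquot := infinitesimal_ofSeq_iff.1 (H _ hr hri _ hv)
  rw [tendsto_zero_iff_abs_tendsto_zero] at hquot ⊢
  simpa only [Function.comp_def, abs_div, abs_abs] using hquot

/-- Nonstandard characterization of differentiability:  `f` has derivative `L` at `x₀` iff
for every positive infinitesimal `r` and every `v` with `v/r` finite, the quotient
`(*f(x₀ + v) − f(x₀) − L·v)/r` is infinitesimal. -/
theorem stmt0 (f : ℝ → ℝ) (x₀ L : ℝ) :
    HasDerivAt f L x₀ ↔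
      ∀ r : ℝ*, 0 < r → Infinitesimal r →
        ∀ v : ℝ*, HFinite (v / r) →
          Infinitesimal ((hyperExt f ((x₀ : ℝ*) + v) - (f x₀ : ℝ*) - (L : ℝ*) * v) / r) := by
  let g : ℝ → ℝ := fun h => f (x₀ + h) - f x₀ - L * h
  have hext (v : ℝ*) : hyperExt f (x₀ + v) - f x₀ - L * v = hyperExt g v := by
    obtain ⟨vs, rfl⟩ := ofSeq_surjective v
    rfl
  simp only [hext]
  constructor
  · intro hd r hr hri v hv
    refine IsLittleO.infinitesimal_hyperExt_div ?_ hr hri hv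
    simpa only [smul_eq_mul, mul_comm] using hasDerivAt_iff_isLittleO_nhds_zero.1 hd
  · intro H
    rw [hasDerivAt_iff_tendsto_slope_zero]
    have hslope := (tendsto_div_nhdsNE_zero_of_forall_infinitesimal H).add_const L
    rw [zero_add] at hslope
    refine hslope.congr' (eventually_nhdsWithin_of_forall fun t ht => ?_)
    simp only [g, smul_eq_mul]
    field_simp [show t ≠ 0 from ht]
    ring
end

section
/- Let F : ℝ* → ℝ* be a function, r a positive hyperreal, u₀ ∈ ℝ* and t₀ = F(u₀). Suppose F is r-almost affine at u₀, i.e., for all finite hyperreals α, β with α + β = 1 and all hyperreals v, w with (v − u₀)/r and (w − u₀)/r finite, F(αv + βw) − αF(v) − βF(w) = o(r). Then the translate L(v) := F(u₀ + v) − t₀ is r-almost linear: for all finite hyperreals α, β and all hyperreals v, w with v/r and w/r finite, L(αv + βw) − αL(v) − βL(w) = o(r). In particular, an r-almost affine map fixing its base point is r-almost linear. -/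
open Hyperreal

def affineDefect {R : Type*} [Ring R] (F : R → R) (α β v w : R) : R :=
  F (α * v + β * w) - α * F v - β * F w

/- The translate at `u` is controlled by four affine defects of `F`: `u + α v` is the affine
combination `α (u + v) + (1 - α) u`, the midpoint `m` of `u + α v` and `u + β w` is an affine
combination, and `u + (α v + β w) = 2 m - u`. -/
theorem affineDefect_translate {K : Type*} [Field K] (h2 : (2 : K) ≠ 0) (F : K → K)
    (u α β v w : K) :
    affineDefect (fun x ↦ F (u + x) - F u) α β v w =
      affineDefect F α (1 - α) (u + v) u + affineDefect F β (1 - β) (u + w) u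
        + 2 * affineDefect F (1 / 2) (1 / 2) (u + α * v) (u + β * w)
        + affineDefect F 2 (-1) (u + (α * v + β * w) / 2) u := by
  have hαv : α * (u + v) + (1 - α) * u = u + α * v := by ring
  have hβw : β * (u + w) + (1 - β) * u = u + β * w := by ring
  have hmid : 1 / 2 * (u + α * v) + 1 / 2 * (u + β * w) = u + (α * v + β * w) / 2 := by
    field_simp; ring
  have hend : 2 * (u + (α * v + β * w) / 2) + -1 * u = u + (α * v + β * w) := by
    field_simp; ring
  simp only [affineDefect, hαv, hβw, hmid, hend]
  field_simp
  ring

namespace ArchimedeanClass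

section AddGroup

variable {M : Type*} [AddCommGroup M] [LinearOrder M] [IsOrderedAddMonoid M]

theorem le_mk_add {c : ArchimedeanClass M} {x y : M} (hx : c ≤ mk x) (hy : c ≤ mk y) :
    c ≤ mk (x + y) :=
  (le_min hx hy).trans (min_le_mk_add x y)

theorem lt_mk_add {c : ArchimedeanClass M} {x y : M} (hx : c < mk x) (hy : c < mk y) :
    c < mk (x + y) :=
  (lt_min hx hy).trans_le (min_le_mk_add x y)

theorem le_mk_sub {c : ArchimedeanClass M} {x y : M} (hx : c ≤ mk x) (hy : c ≤ mk y) :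
    c ≤ mk (x - y) :=
  (le_min hx hy).trans (min_le_mk_sub x y)

end AddGroup

variable {K : Type*} [Field K] [LinearOrder K] [IsStrictOrderedRing K] {x y : K}

theorem mk_mul_nonneg (hx : 0 ≤ mk x) (hy : 0 ≤ mk y) : 0 ≤ mk (x * y) := by
  rw [mk_mul]
  exact add_nonneg hx hy

theorem mk_mul_pos (hx : 0 ≤ mk x) (hy : 0 < mk y) : 0 < mk (x * y) := by
  rw [mk_mul]
  exact hy.trans_le (le_add_of_nonneg_left hx)

theorem mk_div_two (x : K) : mk (x / 2) = mk x := by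
  rw [mk_div, mk_ofNat, sub_zero]

end ArchimedeanClass

open ArchimedeanClass

section AlmostAffine

variable {K : Type*} [Field K] [LinearOrder K] [IsStrictOrderedRing K]

/- Finite elements are those of non-negative Archimedean class, and `x = o(r)` is encoded as
`0 < mk (x / r)`. -/
def IsAlmostAffineAt (F : K → K) (r u₀ : K) : Prop :=
  ∀ α β : K, 0 ≤ mk α → 0 ≤ mk β → α + β = 1 →
    ∀ v w : K, 0 ≤ mk ((v - u₀) / r) → 0 ≤ mk ((w - u₀) / r) →
      0 < mk (affineDefect F α β v w / r)

def IsAlmostLinear (L : K → K) (r : K) : Prop :=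
  ∀ α β : K, 0 ≤ mk α → 0 ≤ mk β →
    ∀ v w : K, 0 ≤ mk (v / r) → 0 ≤ mk (w / r) →
      0 < mk (affineDefect L α β v w / r)

theorem IsAlmostAffineAt.isAlmostLinear_translate {F : K → K} {r u₀ : K}
    (hF : IsAlmostAffineAt F r u₀) : IsAlmostLinear (fun v ↦ F (u₀ + v) - F u₀) r := by
  intro α β hα hβ v w hv hw
  have hoffset (x : K) : (u₀ + x - u₀) / r = x / r := by rw [add_sub_cancel_left]
  have hbase : 0 ≤ mk ((u₀ - u₀) / r) := by simp
  have hone : (0 : ArchimedeanClass K) ≤ mk 1 := mk_one.ge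
  have hαv : 0 ≤ mk ((u₀ + α * v - u₀) / r) := by
    rw [hoffset, mul_div_assoc]
    exact mk_mul_nonneg hα hv
  have hβw : 0 ≤ mk ((u₀ + β * w - u₀) / r) := by
    rw [hoffset, mul_div_assoc]
    exact mk_mul_nonneg hβ hw
  have hmid : 0 ≤ mk ((u₀ + (α * v + β * w) / 2 - u₀) / r) := by
    rw [hoffset, div_right_comm, mk_div_two, add_div, mul_div_assoc, mul_div_assoc]
    exact le_mk_add (mk_mul_nonneg hα hv) (mk_mul_nonneg hβ hw)
  have hhalf : (0 : ArchimedeanClass K) ≤ mk (1 / 2) := by rw [mk_div_two]; exact hone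
  rw [affineDefect_translate two_ne_zero, add_div, add_div, add_div, mul_div_assoc]
  refine lt_mk_add (lt_mk_add (lt_mk_add ?_ ?_) ?_) ?_
  · exact hF α (1 - α) hα (le_mk_sub hone hα) (add_sub_cancel α 1) _ _
      (by rwa [hoffset]) hbase
  · exact hF β (1 - β) hβ (le_mk_sub hone hβ) (add_sub_cancel β 1) _ _
      (by rwa [hoffset]) hbase
  · exact mk_mul_pos mk_ofNat.ge (hF _ _ hhalf hhalf (add_halves 1) _ _ hαv hβw)
  · exact hF 2 (-1) mk_ofNat.ge (by rw [mk_neg]; exact hone) (by norm_num) _ _ hmid hbase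

end AlmostAffine

theorem hFinite_iff_mk_nonneg {x : ℝ*} : HFinite x ↔ 0 ≤ mk x := by
  constructor
  · rintro ⟨n, hn⟩
    calc 0 ≤ mk (n : ℝ*) := mk_natCast_nonneg n
      _ ≤ mk x := mk_le_mk_of_abs (by rw [Nat.abs_cast]; exact hn.le)
  · intro hx
    exact exists_nat_gt_of_mk_nonneg (by rwa [mk_abs])

theorem stmt1_general (F : ℝ* → ℝ*) (r : ℝ*) (u₀ t₀ : ℝ*) (ht₀ : t₀ = F u₀)
    (haff : ∀ α β : ℝ*, HFinite α → HFinite β → α + β = 1 →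
      ∀ v w : ℝ*, HFinite ((v - u₀) / r) → HFinite ((w - u₀) / r) →
        Infinitesimal ((F (α * v + β * w) - α * F v - β * F w) / r)) :
    ∀ α β : ℝ*, HFinite α → HFinite β →
      ∀ v w : ℝ*, HFinite (v / r) → HFinite (w / r) →
        Infinitesimal (((F (u₀ + (α * v + β * w)) - t₀)
          - α * (F (u₀ + v) - t₀) - β * (F (u₀ + w) - t₀)) / r) := by
  have hF : IsAlmostAffineAt F r u₀ := by
    simpa only [IsAlmostAffineAt, affineDefect, hFinite_iff_mk_nonneg, infinitesimal_iff]
      using haff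
  subst ht₀
  simpa only [IsAlmostLinear, affineDefect, hFinite_iff_mk_nonneg, infinitesimal_iff]
    using hF.isAlmostLinear_translate

/-- The translate `L(v) := F(u₀ + v) − t₀` of an `r`-almost affine map at `u₀`
(with `t₀ = F(u₀)`) is `r`-almost linear. -/
theorem stmt1 (F : ℝ* → ℝ*) (r : ℝ*) (hr : 0 < r) (u₀ t₀ : ℝ*) (ht₀ : t₀ = F u₀)
    (haff : ∀ α β : ℝ*, HFinite α → HFinite β → α + β = 1 →
      ∀ v w : ℝ*, HFinite ((v - u₀) / r) → HFinite ((w - u₀) / r) →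
        Infinitesimal ((F (α * v + β * w) - α * F v - β * F w) / r)) :
    ∀ α β : ℝ*, HFinite α → HFinite β →
      ∀ v w : ℝ*, HFinite (v / r) → HFinite (w / r) →
        Infinitesimal (((F (u₀ + (α * v + β * w)) - t₀)
          - α * (F (u₀ + v) - t₀) - β * (F (u₀ + w) - t₀)) / r) :=
  stmt1_general F r u₀ t₀ ht₀ haff
end

section
/- For every n ≥ 1 and every j ∈ ℤ, the partial sum B_n of the blancmange function is affine on the interval [j/2^n, (j+1)/2^n]: there exist real numbers a and q such that B_n(t) = a·t + q for all t ∈ [j/2^n, (j+1)/2^n]. -/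
/-- Distance from `t` to the nearest integer: the sawtooth generator of the blancmange
function. -/
noncomputable def saw (t : ℝ) : ℝ := |t - round t|

/-- `s_k(t) = s(2^k t)/2^k`. -/
noncomputable def sawk (k : ℕ) (t : ℝ) : ℝ := saw (2 ^ k * t) / 2 ^ k

/-- Partial sums `B_n(t) = ∑_{k<n} s_k(t)`. -/
noncomputable def blancN (n : ℕ) (t : ℝ) : ℝ := ∑ k ∈ Finset.range n, sawk k t

/-!
Each `s_k` with `k < n` is `s(2^k t)` rescaled, and `t ↦ 2^k t` maps a dyadic interval of
level `n` into one of level `n - k ≥ 1`, hence into an interval `[m/2, (m+1)/2]` on which the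
sawtooth `s` is affine (slope `1` if `m` is even, `-1` if `m` is odd). A finite sum of
functions affine on the same interval is affine there.
-/

open Set

def IsAffineOn (f : ℝ → ℝ) (s : Set ℝ) : Prop :=
  ∃ a q : ℝ, ∀ t ∈ s, f t = a * t + q

namespace IsAffineOn

variable {f g : ℝ → ℝ} {s t : Set ℝ}

lemma comp (hf : IsAffineOn f s) (hg : IsAffineOn g t) (hmaps : MapsTo g t s) :
    IsAffineOn (f ∘ g) t := by
  obtain ⟨a, q, hf⟩ := hf
  obtain ⟨b, r, hg⟩ := hg
  refine ⟨a * b, a * r + q, fun x hx => ?_⟩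
  rw [Function.comp_apply, hf _ (hmaps hx), hg x hx]
  ring

lemma div_const (hf : IsAffineOn f s) (c : ℝ) : IsAffineOn (fun x => f x / c) s := by
  obtain ⟨a, q, hf⟩ := hf
  exact ⟨a / c, q / c, fun x hx => by simp only [hf x hx]; ring⟩

lemma sum {ι : Type*} (u : Finset ι) {F : ι → ℝ → ℝ} (hF : ∀ i ∈ u, IsAffineOn (F i) s) :
    IsAffineOn (fun x => ∑ i ∈ u, F i x) s := by
  choose! a q hF using hF
  refine ⟨∑ i ∈ u, a i, ∑ i ∈ u, q i, fun x hx => ?_⟩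
  rw [Finset.sum_mul, ← Finset.sum_add_distrib]
  exact Finset.sum_congr rfl fun i hi => hF i hi x hx

end IsAffineOn

lemma isAffineOn_const_mul (c : ℝ) (s : Set ℝ) : IsAffineOn (c * ·) s :=
  ⟨c, 0, fun x _ => by ring⟩

lemma saw_eq_sub_of_mem_Icc {l : ℤ} {t : ℝ} (ht : t ∈ Icc (l : ℝ) (l + 1 / 2)) :
    saw t = t - l := by
  have hfloor : ⌊t⌋ = l := Int.floor_eq_iff.mpr ⟨ht.1, by linarith [ht.2]⟩
  rw [saw, abs_sub_round_eq_min, Int.fract, hfloor, min_eq_left (by linarith [ht.2])]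

lemma saw_eq_add_one_sub_of_mem_Icc {l : ℤ} {t : ℝ} (ht : t ∈ Icc ((l : ℝ) + 1 / 2) (l + 1)) :
    saw t = l + 1 - t := by
  have hround : round t = l + 1 :=
    round_eq t ▸ Int.floor_eq_iff.mpr ⟨by push_cast; linarith [ht.1], by push_cast; linarith [ht.2]⟩
  rw [saw, hround, abs_of_nonpos (by push_cast; linarith [ht.2])]
  push_cast
  ring

lemma isAffineOn_saw (m : ℤ) : IsAffineOn saw (Icc ((m : ℝ) / 2) ((m + 1) / 2)) := by
  rcases Int.even_or_odd' m with ⟨l, rfl | rfl⟩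
  · refine ⟨1, -l, fun t ⟨h1, h2⟩ => ?_⟩
    push_cast at h1 h2
    rw [saw_eq_sub_of_mem_Icc (l := l) ⟨by linarith, by linarith⟩]
    ring
  · refine ⟨-1, l + 1, fun t ⟨h1, h2⟩ => ?_⟩
    push_cast at h1 h2
    rw [saw_eq_add_one_sub_of_mem_Icc (l := l) ⟨by linarith, by linarith⟩]
    ring

lemma mapsTo_two_pow_mul_Icc (j : ℤ) (k d : ℕ) :
    MapsTo (2 ^ k * ·) (Icc ((j : ℝ) / 2 ^ (k + d)) ((j + 1) / 2 ^ (k + d)))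
      (Icc ((j : ℝ) / 2 ^ d) ((j + 1) / 2 ^ d)) := by
  rintro t ⟨h1, h2⟩
  rw [pow_add, div_le_iff₀ (by positivity)] at h1
  rw [pow_add, le_div_iff₀ (by positivity)] at h2
  constructor
  · rw [div_le_iff₀ (by positivity)]
    linarith
  · rw [le_div_iff₀ (by positivity)]
    linarith

lemma Icc_dyadic_subset (j : ℤ) (d e : ℕ) :
    Icc ((j : ℝ) / 2 ^ (d + e)) ((j + 1) / 2 ^ (d + e)) ⊆
      Icc (((j / 2 ^ d : ℤ) : ℝ) / 2 ^ e) (((j / 2 ^ d : ℤ) + 1) / 2 ^ e) := by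
  have hd : (0 : ℤ) < 2 ^ d := by positivity
  have hlow : ((j / 2 ^ d : ℤ) : ℝ) * 2 ^ d ≤ j := by exact_mod_cast Int.ediv_mul_le j hd.ne'
  have hupp : (j : ℝ) + 1 ≤ (((j / 2 ^ d : ℤ) : ℝ) + 1) * 2 ^ d := by
    exact_mod_cast Int.lt_ediv_add_one_mul_self j hd
  rw [pow_add, ← div_div, ← div_div]
  apply Icc_subset_Icc <;> apply div_le_div_of_nonneg_right _ (by positivity)
  · rwa [le_div_iff₀ (by positivity)]
  · rwa [div_le_iff₀ (by positivity)]

lemma isAffineOn_sawk {k n : ℕ} (hk : k < n) (j : ℤ) :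
    IsAffineOn (sawk k) (Icc ((j : ℝ) / 2 ^ n) ((j + 1) / 2 ^ n)) := by
  obtain ⟨d, rfl⟩ := Nat.exists_eq_add_of_lt hk
  have hmaps := (mapsTo_two_pow_mul_Icc j k (d + 1)).mono_right (Icc_dyadic_subset j d 1)
  rw [pow_one] at hmaps
  exact ((isAffineOn_saw _).comp (isAffineOn_const_mul _ _) hmaps).div_const _

lemma isAffineOn_blancN (n : ℕ) (j : ℤ) :
    IsAffineOn (blancN n) (Icc ((j : ℝ) / 2 ^ n) ((j + 1) / 2 ^ n)) :=
  IsAffineOn.sum _ fun _ hk => isAffineOn_sawk (Finset.mem_range.mp hk) j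

/-- For `n ≥ 1` and `j ∈ ℤ`, the partial sum `B_n` is affine on `[j/2^n, (j+1)/2^n]`. -/
theorem stmt4 : ∀ n : ℕ, 1 ≤ n → ∀ j : ℤ,
    ∃ a q : ℝ, ∀ t ∈ Set.Icc ((j : ℝ) / 2 ^ n) (((j : ℝ) + 1) / 2 ^ n),
      blancN n t = a * t + q :=
  fun n _ j => isAffineOn_blancN n j
end

section
/- Let n ≥ 1, x ∈ ℝ, k ∈ ℤ, and let C : ℝ → ℝ be a function that is affine on the interval x + (k·2^{−n+1}, (k+1)·2^{−n+1}). Then there is a subinterval I ⊂ (k·2^{−n+1}, (k+1)·2^{−n+1}) of length at least 2^{−n} such that B_n + C is affine on x + I. -/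
/-!
The kinks of `s_k` lie on the grid `2^{-(k+1)}ℤ`, which for `k < n` is contained in `2^{-n}ℤ`;
hence `B_n` is affine on every dyadic interval `(m/2^n, (m+1)/2^n)`. The interval
`x + (k·2^{-n+1}, (k+1)·2^{-n+1})` has length `2·2^{-n}`, so it contains such a dyadic interval,
on which `B_n + C` is then affine.
-/

open Set

namespace IsAffineOn

variable {f g : ℝ → ℝ} {s s' : Set ℝ}

lemma mono (hf : IsAffineOn f s) (h : s' ⊆ s) : IsAffineOn f s' :=
  let ⟨a, q, hf⟩ := hf
  ⟨a, q, fun t ht => hf t (h ht)⟩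

lemma zero : IsAffineOn 0 s := ⟨0, 0, fun _ _ => by simp⟩

lemma add (hf : IsAffineOn f s) (hg : IsAffineOn g s) : IsAffineOn (f + g) s := by
  obtain ⟨a, q, hf⟩ := hf
  obtain ⟨b, r, hg⟩ := hg
  exact ⟨a + b, q + r, fun t ht => by simp only [Pi.add_apply, hf t ht, hg t ht]; ring⟩

lemma finset_sum {ι : Type*} (u : Finset ι) {F : ι → ℝ → ℝ}
    (hF : ∀ i ∈ u, IsAffineOn (F i) s) : IsAffineOn (∑ i ∈ u, F i) s :=
  Finset.sum_induction F (IsAffineOn · s) (fun _ _ => add) zero hF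

lemma comp_mul_div (hf : IsAffineOn f s) (c d : ℝ) :
    IsAffineOn (fun t => f (c * t) / d) ((c * ·) ⁻¹' s) := by
  obtain ⟨a, q, hf⟩ := hf
  exact ⟨a * c / d, q / d, fun t ht => by simp only [hf _ ht]; ring⟩

end IsAffineOn

lemma saw_isAffineOn (j : ℤ) : IsAffineOn saw (Ioo ((j : ℝ) / 2) (((j : ℝ) + 1) / 2)) := by
  rcases Int.even_or_odd' j with ⟨i, rfl | rfl⟩
  · refine ⟨1, -i, fun v ⟨h₁, h₂⟩ => ?_⟩
    push_cast at h₁ h₂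
    have hround : round v = i := by
      rw [round_eq, Int.floor_eq_iff]
      constructor <;> linarith
    rw [saw, hround, abs_of_nonneg (by linarith)]
    ring
  · refine ⟨-1, i + 1, fun v ⟨h₁, h₂⟩ => ?_⟩
    push_cast at h₁ h₂
    have hround : round v = i + 1 := by
      rw [round_eq, Int.floor_eq_iff]
      push_cast
      constructor <;> linarith
    rw [saw, hround, abs_of_nonpos (by push_cast; linarith)]
    push_cast
    ring

lemma sawk_isAffineOn (k : ℕ) (j : ℤ) :
    IsAffineOn (sawk k) (Ioo ((j : ℝ) / 2 ^ (k + 1)) (((j : ℝ) + 1) / 2 ^ (k + 1))) := by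
  refine ((saw_isAffineOn j).comp_mul_div (2 ^ k) (2 ^ k)).mono fun v ⟨h₁, h₂⟩ => ?_
  rw [pow_succ, div_lt_iff₀ (by positivity)] at h₁
  rw [pow_succ, lt_div_iff₀ (by positivity)] at h₂
  constructor
  · rw [div_lt_iff₀ two_pos]; linarith
  · rw [lt_div_iff₀ two_pos]; linarith

lemma Ioo_int_div_subset (m : ℤ) {d : ℤ} (hd : 0 < d) {N : ℝ} (hN : 0 < N) :
    Ioo ((m : ℝ) / (N * d)) (((m : ℝ) + 1) / (N * d)) ⊆
      Ioo (((m / d : ℤ) : ℝ) / N) ((((m / d : ℤ) : ℝ) + 1) / N) := by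
  have hdR : (0 : ℝ) < d := by exact_mod_cast hd
  have hlo : ((m / d * d : ℤ) : ℝ) ≤ m := by exact_mod_cast Int.ediv_mul_le m hd.ne'
  have hhi : (m : ℝ) + 1 ≤ ((m / d + 1) * d : ℤ) := by
    exact_mod_cast Int.lt_ediv_add_one_mul_self m hd
  push_cast at hlo hhi
  apply Ioo_subset_Ioo
  · rw [div_le_div_iff₀ hN (by positivity)]; nlinarith
  · rw [div_le_div_iff₀ (by positivity) hN]; nlinarith

lemma blancN_isAffineOn (n : ℕ) (m : ℤ) :
    IsAffineOn (blancN n) (Ioo ((m : ℝ) / 2 ^ n) (((m : ℝ) + 1) / 2 ^ n)) := by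
  have hsum : blancN n = ∑ k ∈ Finset.range n, sawk k := by
    ext t
    rw [blancN, Finset.sum_apply]
  rw [hsum]
  refine IsAffineOn.finset_sum _ fun k hk => ?_
  have hkn : k + 1 + (n - 1 - k) = n := by have := Finset.mem_range.mp hk; omega
  have hpow : (2 : ℝ) ^ n = 2 ^ (k + 1) * ((2 ^ (n - 1 - k) : ℤ) : ℝ) := by
    push_cast
    rw [← pow_add, hkn]
  rw [hpow]
  exact (sawk_isAffineOn k _).mono (Ioo_int_div_subset m (by positivity) (by positivity))

lemma exists_int_le_div_and_succ_div_le {N : ℝ} (hN : 0 < N) (u : ℝ) :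
    ∃ m : ℤ, u ≤ (m : ℝ) / N ∧ ((m : ℝ) + 1) / N ≤ u + 2 / N := by
  refine ⟨⌊u * N⌋ + 1, ?_, ?_⟩
  · rw [le_div_iff₀ hN]
    push_cast
    linarith [Int.lt_floor_add_one (u * N)]
  · rw [div_le_iff₀ hN, add_mul, div_mul_cancel₀ _ hN.ne']
    push_cast
    linarith [Int.floor_le (u * N)]

theorem stmt6_general (n : ℕ) (x : ℝ) (k : ℤ) (C : ℝ → ℝ)
    (hC : ∃ a q : ℝ, ∀ t ∈ Set.Ioo ((k : ℝ) * 2 ^ (-(n : ℤ) + 1))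
      (((k : ℝ) + 1) * 2 ^ (-(n : ℤ) + 1)), C (x + t) = a * (x + t) + q) :
    ∃ α β : ℝ, (2 : ℝ) ^ (-(n : ℤ)) ≤ β - α ∧
      Set.Ioo α β ⊆ Set.Ioo ((k : ℝ) * 2 ^ (-(n : ℤ) + 1))
        (((k : ℝ) + 1) * 2 ^ (-(n : ℤ) + 1)) ∧
      ∃ a q : ℝ, ∀ t ∈ Set.Ioo α β, blancN n (x + t) + C (x + t) = a * (x + t) + q := by
  obtain ⟨a, q, hC⟩ := hC
  have hN : (0 : ℝ) < 2 ^ n := by positivity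
  have hmesh : (2 : ℝ) ^ (-(n : ℤ)) = 1 / 2 ^ n := by rw [zpow_neg, zpow_natCast, one_div]
  have hmesh₂ : (2 : ℝ) ^ (-(n : ℤ) + 1) = 2 / 2 ^ n := by
    rw [zpow_add₀ two_ne_zero, hmesh, zpow_one]; ring
  rw [hmesh₂] at hC ⊢
  rw [hmesh]
  obtain ⟨m, hlo, hhi⟩ := exists_int_le_div_and_succ_div_le hN (x + k * (2 / 2 ^ n))
  refine ⟨m / 2 ^ n - x, (m + 1) / 2 ^ n - x, by rw [add_div]; linarith,
    Ioo_subset_Ioo (by linarith) (by linarith), ?_⟩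
  have hCaff : IsAffineOn C (Ioo ((m : ℝ) / 2 ^ n) (((m : ℝ) + 1) / 2 ^ n)) :=
    ⟨a, q, fun v ⟨h₁, h₂⟩ => by
      simpa using hC (v - x) ⟨by linarith, by linarith⟩⟩
  obtain ⟨b, r, hsum⟩ := (blancN_isAffineOn n m).add hCaff
  exact ⟨b, r, fun t ⟨h₁, h₂⟩ => hsum (x + t) ⟨by linarith, by linarith⟩⟩

/-- If `C` is affine on `x + (k·2^{−n+1}, (k+1)·2^{−n+1})`, then there is a subinterval
`I ⊆ (k·2^{−n+1}, (k+1)·2^{−n+1})` of length at least `2^{−n}` such that `B_n + C` is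
affine on `x + I`. -/
theorem stmt6 (n : ℕ) (hn : 1 ≤ n) (x : ℝ) (k : ℤ) (C : ℝ → ℝ)
    (hC : ∃ a q : ℝ, ∀ t ∈ Set.Ioo ((k : ℝ) * 2 ^ (-(n : ℤ) + 1))
      (((k : ℝ) + 1) * 2 ^ (-(n : ℤ) + 1)), C (x + t) = a * (x + t) + q) :
    ∃ α β : ℝ, (2 : ℝ) ^ (-(n : ℤ)) ≤ β - α ∧
      Set.Ioo α β ⊆ Set.Ioo ((k : ℝ) * 2 ^ (-(n : ℤ) + 1))
        (((k : ℝ) + 1) * 2 ^ (-(n : ℤ) + 1)) ∧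
      ∃ a q : ℝ, ∀ t ∈ Set.Ioo α β, blancN n (x + t) + C (x + t) = a * (x + t) + q :=
  stmt6_general n x k C hC
end

section
/- The blancmange function B is not affine on any nontrivial interval: for all real numbers α < β, there do not exist real numbers a and q such that B(t) = a·t + q for all t ∈ (α, β). -/
/-- The blancmange (Takagi) function `B(t) = ∑_{k=0}^∞ s_k(t)`. -/
noncomputable def blanc (t : ℝ) : ℝ := ∑' k : ℕ, sawk k t

/-!
From `B(t) = s(t) + B(2t)/2` we get `B(t) = 2 B(t/2) - 2 s(t/2)`. Since `s` is affine on every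
dyadic interval `(j/2^(n+1), (j+1)/2^(n+1))`, affinity of `B` on such an interval passes to the
doubled interval `(j/2^n, (j+1)/2^n)`, and after `n` steps to an interval `(j, j+1)`. By
periodicity `B` would then be affine on `(0, 1)`, which the values `B(1/8) = 3/8`,
`B(1/4) = B(1/2) = 1/2` rule out. Every nontrivial interval contains a dyadic one.
-/

open Set

lemma saw_nonneg (t : ℝ) : 0 ≤ saw t := abs_nonneg _

lemma saw_le_half (t : ℝ) : saw t ≤ 1 / 2 := abs_sub_round t

lemma saw_add_intCast (t : ℝ) (m : ℤ) : saw (t + m) = saw t := by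
  simp only [saw, round_add_intCast, Int.cast_add, add_sub_add_right_eq_sub]

lemma saw_eq_of_round_eq {t : ℝ} {m : ℤ} (h : round t = m) : saw t = |t - m| := by
  rw [saw, h]

lemma summable_sawk (t : ℝ) : Summable fun k ↦ sawk k t := by
  refine Summable.of_nonneg_of_le (fun k ↦ div_nonneg (saw_nonneg _) (by positivity))
    (fun k ↦ ?_) summable_geometric_two
  rw [sawk, one_div_pow]
  gcongr
  exact (saw_le_half _).trans (by norm_num)

lemma blanc_eq_saw_add_blanc_two_mul (t : ℝ) : blanc t = saw t + blanc (2 * t) / 2 := by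
  have hshift (k : ℕ) : sawk (k + 1) t = sawk k (2 * t) / 2 := by
    rw [sawk, sawk, pow_succ, div_div]
    ring_nf
  rw [blanc, (summable_sawk t).tsum_eq_zero_add, tsum_congr hshift, tsum_div_const]
  simp [sawk, blanc]

lemma blanc_add_intCast (t : ℝ) (m : ℤ) : blanc (t + m) = blanc t := by
  refine tsum_congr fun k ↦ ?_
  have h : (2 : ℝ) ^ k * (t + m) = 2 ^ k * t + ((2 ^ k * m : ℤ) : ℝ) := by push_cast; ring
  rw [sawk, sawk, h, saw_add_intCast]

lemma blanc_zero : blanc 0 = 0 := by simp [blanc, sawk, saw]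

lemma blanc_half : blanc (1 / 2) = 1 / 2 := by
  have h := blanc_eq_saw_add_blanc_two_mul (1 / 2)
  rw [show 2 * (1 / 2 : ℝ) = 0 + (1 : ℤ) by norm_num, blanc_add_intCast, blanc_zero,
    saw_eq_of_round_eq (m := 1) (by norm_num [round_eq_iff])] at h
  norm_num [h]

lemma blanc_quarter : blanc (1 / 4) = 1 / 2 := by
  rw [blanc_eq_saw_add_blanc_two_mul, show 2 * (1 / 4 : ℝ) = 1 / 2 by norm_num, blanc_half,
    saw_eq_of_round_eq (m := 0) (by norm_num [round_eq_iff])]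
  norm_num

lemma blanc_eighth : blanc (1 / 8) = 3 / 8 := by
  rw [blanc_eq_saw_add_blanc_two_mul, show 2 * (1 / 8 : ℝ) = 1 / 4 by norm_num, blanc_quarter,
    saw_eq_of_round_eq (m := 0) (by norm_num [round_eq_iff])]
  norm_num

lemma IsAffineOn.mono_s7 {f : ℝ → ℝ} {s s' : Set ℝ} (hf : IsAffineOn f s) (h : s' ⊆ s) :
    IsAffineOn f s' :=
  let ⟨a, q, hf⟩ := hf
  ⟨a, q, fun t ht ↦ hf t (h ht)⟩

def dyadicCell (n : ℕ) (j : ℤ) : Set ℝ := Ioo (j / 2 ^ n) ((j + 1) / 2 ^ n)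

lemma dyadicCell_add_subset (m n : ℕ) (j : ℤ) :
    dyadicCell (m + n) j ⊆ dyadicCell m (j / 2 ^ n) := by
  set q := j / 2 ^ n
  have hpos : (0 : ℤ) < 2 ^ n := by positivity
  have hq_le : (q : ℝ) * 2 ^ n ≤ j := by exact_mod_cast Int.ediv_mul_le j hpos.ne'
  have hle_q : (j : ℝ) + 1 ≤ (q + 1) * 2 ^ n := by
    exact_mod_cast Int.lt_ediv_add_one_mul_self j hpos
  rintro t ⟨hlo, hhi⟩
  rw [pow_add, mul_comm, ← div_div] at hlo hhi
  constructor
  · refine lt_of_le_of_lt ?_ hlo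
    gcongr
    rwa [le_div_iff₀ (by positivity)]
  · refine hhi.trans_le ?_
    gcongr
    rwa [div_le_iff₀ (by positivity)]

lemma saw_isAffineOn_dyadicCell_one (q : ℤ) : IsAffineOn saw (dyadicCell 1 q) := by
  rcases Int.even_or_odd' q with ⟨m, rfl | rfl⟩
  · refine ⟨1, -m, fun t ⟨hlo, hhi⟩ ↦ ?_⟩
    push_cast at hlo hhi
    rw [saw_eq_of_round_eq (m := m) (round_eq_iff.2 ⟨by linarith, by linarith⟩),
      abs_of_pos (by linarith)]
    ring
  · refine ⟨-1, m + 1, fun t ⟨hlo, hhi⟩ ↦ ?_⟩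
    push_cast at hlo hhi
    rw [saw_eq_of_round_eq (m := m + 1) (round_eq_iff.2 ⟨by push_cast; linarith,
      by push_cast; linarith⟩), abs_of_neg (by push_cast; linarith)]
    push_cast
    ring

lemma saw_isAffineOn_dyadicCell (n : ℕ) (j : ℤ) : IsAffineOn saw (dyadicCell (n + 1) j) := by
  rw [add_comm]
  exact (saw_isAffineOn_dyadicCell_one _).mono_s7 (dyadicCell_add_subset 1 n j)

lemma half_mem_dyadicCell {n : ℕ} {j : ℤ} {t : ℝ} (ht : t ∈ dyadicCell n j) :
    t / 2 ∈ dyadicCell (n + 1) j := by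
  obtain ⟨hlo, hhi⟩ := ht
  simp only [dyadicCell, pow_succ, ← div_div]
  exact ⟨by gcongr, by gcongr⟩

lemma IsAffineOn.blanc_dyadicCell_of_succ {n : ℕ} {j : ℤ}
    (h : IsAffineOn blanc (dyadicCell (n + 1) j)) : IsAffineOn blanc (dyadicCell n j) := by
  obtain ⟨a, q, hb⟩ := h
  obtain ⟨c, d, hs⟩ := saw_isAffineOn_dyadicCell n j
  refine ⟨a - c, 2 * q - 2 * d, fun t ht ↦ ?_⟩
  have hfun := blanc_eq_saw_add_blanc_two_mul (t / 2)
  rw [mul_div_cancel₀ t two_ne_zero, hb _ (half_mem_dyadicCell ht),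
    hs _ (half_mem_dyadicCell ht)] at hfun
  linarith

lemma not_isAffineOn_blanc_Ioo_zero_one : ¬ IsAffineOn blanc (Ioo 0 1) := by
  rintro ⟨a, q, h⟩
  have h8 := h (1 / 8) (by norm_num)
  have h4 := h (1 / 4) (by norm_num)
  have h2 := h (1 / 2) (by norm_num)
  rw [blanc_eighth] at h8
  rw [blanc_quarter] at h4
  rw [blanc_half] at h2
  linarith

lemma not_isAffineOn_blanc_dyadicCell (n : ℕ) (j : ℤ) :
    ¬ IsAffineOn blanc (dyadicCell n j) := by
  induction n with
  | zero =>
    rintro ⟨a, q, h⟩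
    refine not_isAffineOn_blanc_Ioo_zero_one ⟨a, a * j + q, fun t ⟨hlo, hhi⟩ ↦ ?_⟩
    rw [← blanc_add_intCast t j, h (t + j) (by
      simp only [dyadicCell, pow_zero, div_one]; exact ⟨by linarith, by linarith⟩)]
    ring
  | succ n ih => exact fun h ↦ ih h.blanc_dyadicCell_of_succ

lemma exists_dyadicCell_subset_Ioo {α β : ℝ} (h : α < β) :
    ∃ n j, dyadicCell n j ⊆ Ioo α β := by
  obtain ⟨n, hn⟩ := pow_unbounded_of_one_lt (2 / (β - α)) (one_lt_two (α := ℝ))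
  have hpow : (0 : ℝ) < 2 ^ n := by positivity
  have hlen : 2 < (β - α) * 2 ^ n := by
    rwa [div_lt_iff₀ (sub_pos.2 h), mul_comm] at hn
  refine ⟨n, ⌊α * 2 ^ n⌋ + 1, fun t ⟨hlo, hhi⟩ ↦ ⟨?_, ?_⟩⟩
  · refine lt_of_le_of_lt ?_ hlo
    rw [le_div_iff₀ hpow]
    push_cast
    linarith [Int.lt_floor_add_one (α * 2 ^ n)]
  · refine hhi.trans_le ?_
    rw [div_le_iff₀ hpow]
    push_cast
    linarith [Int.floor_le (α * 2 ^ n)]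

/-- The blancmange function is not affine on any nontrivial open interval. -/
theorem stmt7 : ∀ α β : ℝ, α < β →
    ¬ ∃ a q : ℝ, ∀ t ∈ Set.Ioo α β, blanc t = a * t + q := by
  rintro α β h ⟨a, q, hb⟩
  obtain ⟨n, j, hsub⟩ := exists_dyadicCell_subset_Ioo h
  exact not_isAffineOn_blanc_dyadicCell n j (IsAffineOn.mono_s7 ⟨a, q, hb⟩ hsub)
end

section
/- The blancmange function B is continuous on ℝ and is differentiable at no point of ℝ: for every t₀ ∈ ℝ, B is not differentiable at t₀. -/
open Set Filter Topology Asymptotics Finset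

lemma saw_eq_abs_sub_intCast {t : ℝ} {m : ℤ} (h : |t - m| ≤ 1 / 2) : saw t = |t - m| := by
  refine le_antisymm (round_le t m) ?_
  by_cases hr : round t = m
  · simp [saw, hr]
  · have h1 : (1 : ℝ) ≤ |(round t : ℝ) - m| := by
      exact_mod_cast Int.one_le_abs (sub_ne_zero.mpr hr)
    have h2 := abs_sub_le (round t : ℝ) t m
    rw [abs_sub_comm (round t : ℝ) t] at h2
    unfold saw
    linarith

lemma lipschitzWith_saw : LipschitzWith 1 saw := by
  have key : ∀ a b, saw a ≤ saw b + |a - b| := fun a b =>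
    calc saw a ≤ |a - round b| := round_le a _
      _ ≤ |a - b| + |b - round b| := abs_sub_le _ _ _
      _ = saw b + |a - b| := add_comm _ _
  refine LipschitzWith.of_dist_le_mul fun a b => ?_
  rw [NNReal.coe_one, one_mul, Real.dist_eq, Real.dist_eq, abs_sub_le_iff]
  exact ⟨by linarith [key a b], by linarith [key b a, abs_sub_comm a b]⟩

lemma norm_sawk_le (k : ℕ) (t : ℝ) : ‖sawk k t‖ ≤ (1 / 2) ^ k := by
  rw [Real.norm_eq_abs, sawk, abs_div, abs_of_pos (by positivity : (0 : ℝ) < 2 ^ k), saw, abs_abs,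
    div_pow, one_pow]
  gcongr
  linarith [abs_sub_round (2 ^ k * t)]

lemma continuous_blanc : Continuous blanc :=
  continuous_tsum
    (fun _ => (lipschitzWith_saw.continuous.comp (continuous_const_mul _)).div_const _)
    summable_geometric_two norm_sawk_le

lemma saw_sub_saw_of_mem_Icc {q : ℤ} {u v : ℝ} (hu : u ∈ Icc ((q : ℝ) / 2) ((q + 1) / 2))
    (hv : v ∈ Icc ((q : ℝ) / 2) ((q + 1) / 2)) : saw v - saw u = (-1) ^ q * (v - u) := by
  rcases Int.even_or_odd' q with ⟨n, rfl | rfl⟩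
  · have key : ∀ w ∈ Icc (((2 * n : ℤ) : ℝ) / 2) (((2 * n : ℤ) + 1) / 2), saw w = w - n := by
      rintro w ⟨h1, h2⟩
      push_cast at h1 h2
      rw [saw_eq_abs_sub_intCast (m := n) (abs_le.2 ⟨by linarith, by linarith⟩),
        abs_of_nonneg (by linarith)]
    rw [key u hu, key v hv, Even.neg_one_zpow ⟨n, two_mul n⟩]
    ring
  · have key : ∀ w ∈ Icc (((2 * n + 1 : ℤ) : ℝ) / 2) (((2 * n + 1 : ℤ) + 1) / 2),
        saw w = n + 1 - w := by
      rintro w ⟨h1, h2⟩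
      push_cast at h1 h2
      have h : |w - ((n + 1 : ℤ) : ℝ)| ≤ 1 / 2 := by
        push_cast
        exact abs_le.2 ⟨by linarith, by linarith⟩
      rw [saw_eq_abs_sub_intCast h, abs_of_nonpos (by push_cast; linarith)]
      push_cast
      ring
    rw [key u hu, key v hv, Odd.neg_one_zpow ⟨n, rfl⟩]
    ring

lemma sawk_sub_sawk_of_mem_Icc (k : ℕ) {q : ℤ} {u v : ℝ}
    (hu : u ∈ Icc ((q : ℝ) / 2 ^ (k + 1)) ((q + 1) / 2 ^ (k + 1)))
    (hv : v ∈ Icc ((q : ℝ) / 2 ^ (k + 1)) ((q + 1) / 2 ^ (k + 1))) :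
    sawk k v - sawk k u = (-1) ^ q * (v - u) := by
  have scale : ∀ w ∈ Icc ((q : ℝ) / 2 ^ (k + 1)) ((q + 1) / 2 ^ (k + 1)),
      2 ^ k * w ∈ Icc ((q : ℝ) / 2) ((q + 1) / 2) := by
    rintro w ⟨h1, h2⟩
    rw [pow_succ, div_le_iff₀ (by positivity)] at h1
    rw [pow_succ, le_div_iff₀ (by positivity)] at h2
    constructor
    · rw [div_le_iff₀ two_pos]; linarith
    · rw [le_div_iff₀ two_pos]; linarith
  rw [sawk, sawk, ← sub_div, saw_sub_saw_of_mem_Icc (scale u hu) (scale v hv)]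
  field_simp

lemma two_mul_floor_le_floor_two_mul {α : Type*} [Field α] [LinearOrder α] [IsStrictOrderedRing α]
    [FloorRing α] (a : α) : 2 * ⌊a⌋ ≤ ⌊2 * a⌋ :=
  Int.le_floor.2 (by push_cast; linarith [Int.floor_le a])

lemma floor_two_mul_le {α : Type*} [Field α] [LinearOrder α] [IsStrictOrderedRing α]
    [FloorRing α] (a : α) : ⌊2 * a⌋ ≤ 2 * ⌊a⌋ + 1 :=
  Int.le_of_lt_add_one (Int.floor_lt.2 (by push_cast; linarith [Int.lt_floor_add_one a]))

noncomputable def dyadicLeft (n : ℕ) (t : ℝ) : ℝ := ⌊2 ^ n * t⌋ / 2 ^ n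

noncomputable def dyadicRight (n : ℕ) (t : ℝ) : ℝ := (⌊2 ^ n * t⌋ + 1) / 2 ^ n

lemma dyadicLeft_le (n : ℕ) (t : ℝ) : dyadicLeft n t ≤ t := by
  rw [dyadicLeft, div_le_iff₀ (by positivity)]
  linarith [Int.floor_le (2 ^ n * t)]

lemma lt_dyadicRight (n : ℕ) (t : ℝ) : t < dyadicRight n t := by
  rw [dyadicRight, lt_div_iff₀ (by positivity)]
  linarith [Int.lt_floor_add_one (2 ^ n * t)]

lemma dyadicRight_sub_dyadicLeft (n : ℕ) (t : ℝ) :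
    dyadicRight n t - dyadicLeft n t = (1 / 2) ^ n := by
  rw [dyadicRight, dyadicLeft, ← sub_div, add_sub_cancel_left, one_div_pow]

lemma dyadicLeft_lt_dyadicRight (n : ℕ) (t : ℝ) : dyadicLeft n t < dyadicRight n t :=
  (dyadicLeft_le n t).trans_lt (lt_dyadicRight n t)

lemma antitone_dyadicIcc (t : ℝ) :
    Antitone fun n => Icc (dyadicLeft n t) (dyadicRight n t) := by
  refine antitone_nat_of_succ_le fun n => ?_
  have hpos : (0 : ℝ) < 2 ^ (n + 1) := by positivity
  have hdouble : 2 ^ (n + 1) * t = 2 * (2 ^ n * t) := by ring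
  have h1 : (2 * ⌊2 ^ n * t⌋ : ℝ) ≤ ⌊2 ^ (n + 1) * t⌋ := by
    rw [hdouble]; exact_mod_cast two_mul_floor_le_floor_two_mul _
  have h2 : (⌊2 ^ (n + 1) * t⌋ : ℝ) ≤ 2 * ⌊2 ^ n * t⌋ + 1 := by
    rw [hdouble]; exact_mod_cast floor_two_mul_le _
  apply Set.Icc_subset_Icc
  · calc dyadicLeft n t = 2 * ⌊2 ^ n * t⌋ / 2 ^ (n + 1) := by
          rw [dyadicLeft, pow_succ]; field_simp
      _ ≤ dyadicLeft (n + 1) t := div_le_div_of_nonneg_right h1 hpos.le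
  · calc dyadicRight (n + 1) t ≤ (2 * ⌊2 ^ n * t⌋ + 2) / 2 ^ (n + 1) :=
          div_le_div_of_nonneg_right (by linarith) hpos.le
      _ = dyadicRight n t := by rw [dyadicRight, pow_succ]; field_simp

lemma tendsto_dyadicLeft (t : ℝ) : Tendsto (dyadicLeft · t) atTop (𝓝 t) := by
  have hw := tendsto_pow_atTop_nhds_zero_of_lt_one (r := (1 / 2 : ℝ)) (by norm_num) (by norm_num)
  have hlower : Tendsto (fun n => t - (1 / 2) ^ n) atTop (𝓝 t) := by
    simpa using tendsto_const_nhds.sub hw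
  refine tendsto_of_tendsto_of_tendsto_of_le_of_le hlower tendsto_const_nhds (fun n => ?_)
    (dyadicLeft_le · t)
  linarith [lt_dyadicRight n t, dyadicRight_sub_dyadicLeft n t]

lemma tendsto_dyadicRight (t : ℝ) : Tendsto (dyadicRight · t) atTop (𝓝 t) := by
  have hw := tendsto_pow_atTop_nhds_zero_of_lt_one (r := (1 / 2 : ℝ)) (by norm_num) (by norm_num)
  have hupper : Tendsto (fun n => t + (1 / 2) ^ n) atTop (𝓝 t) := by
    simpa using tendsto_const_nhds.add hw
  refine tendsto_of_tendsto_of_tendsto_of_le_of_le tendsto_const_nhds hupper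
    (fun n => (lt_dyadicRight n t).le) (fun n => ?_)
  linarith [dyadicLeft_le n t, dyadicRight_sub_dyadicLeft n t]

lemma sawk_intCast_div_two_pow {k n : ℕ} (h : n ≤ k) (j : ℤ) : sawk k (j / 2 ^ n) = 0 := by
  obtain ⟨c, rfl⟩ := Nat.exists_eq_add_of_le h
  have : (2 : ℝ) ^ (n + c) * (j / 2 ^ n) = ((j * 2 ^ c : ℤ) : ℝ) := by
    push_cast
    rw [pow_add]
    field_simp
  rw [sawk, this, saw, round_intCast, sub_self, abs_zero, zero_div]

lemma blanc_intCast_div_two_pow (n : ℕ) (j : ℤ) :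
    blanc (j / 2 ^ n) = ∑ k ∈ range n, sawk k (j / 2 ^ n) :=
  tsum_eq_sum fun _ hk => sawk_intCast_div_two_pow (by simpa using hk) j

lemma slope_blanc_dyadic (n : ℕ) (t : ℝ) :
    slope blanc (dyadicLeft n t) (dyadicRight n t) =
      ∑ k ∈ range n, (-1 : ℝ) ^ ⌊2 ^ (k + 1) * t⌋ := by
  have hx : blanc (dyadicLeft n t) = ∑ k ∈ range n, sawk k (dyadicLeft n t) :=
    blanc_intCast_div_two_pow n _
  have hy : blanc (dyadicRight n t) = ∑ k ∈ range n, sawk k (dyadicRight n t) := by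
    have h : dyadicRight n t = ((⌊2 ^ n * t⌋ + 1 : ℤ) : ℝ) / 2 ^ n := by
      rw [dyadicRight, Int.cast_add, Int.cast_one]
    rw [h]
    exact blanc_intCast_div_two_pow n _
  have hle := (dyadicLeft_lt_dyadicRight n t).le
  rw [slope_def_field, hx, hy, ← sum_sub_distrib, sum_div]
  refine sum_congr rfl fun k hk => ?_
  have hsub := antitone_dyadicIcc t (Nat.succ_le_of_lt (mem_range.1 hk))
  rw [sawk_sub_sawk_of_mem_Icc k (hsub (left_mem_Icc.2 hle)) (hsub (right_mem_Icc.2 hle)),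
    dyadicRight_sub_dyadicLeft]
  exact mul_div_cancel_right₀ _ (by positivity)

theorem HasDerivAt.tendsto_slope_of_straddle {f : ℝ → ℝ} {f' t : ℝ} (hf : HasDerivAt f f' t)
    {ι : Type*} {l : Filter ι} {x y : ι → ℝ} (hx : Tendsto x l (𝓝 t)) (hy : Tendsto y l (𝓝 t))
    (hxt : ∀ i, x i ≤ t) (hty : ∀ i, t ≤ y i) (hxy : ∀ i, x i < y i) :
    Tendsto (fun i => slope f (x i) (y i)) l (𝓝 f') := by
  have hr := hasDerivAt_iff_isLittleO.1 hf
  have hxO : (fun i => x i - t) =O[l] fun i => y i - x i := isBigO_of_le _ fun i => by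
    rw [Real.norm_eq_abs, Real.norm_eq_abs, abs_of_nonpos (by linarith [hxt i]),
      abs_of_pos (by linarith [hxy i])]
    linarith [hty i]
  have hyO : (fun i => y i - t) =O[l] fun i => y i - x i := isBigO_of_le _ fun i => by
    rw [Real.norm_eq_abs, Real.norm_eq_abs, abs_of_nonneg (by linarith [hty i]),
      abs_of_pos (by linarith [hxy i])]
    linarith [hxt i]
  have key := (((hr.comp_tendsto hy).trans_isBigO hyO).sub
    ((hr.comp_tendsto hx).trans_isBigO hxO)).tendsto_div_nhds_zero
  refine (by simpa using key.add_const f' : Tendsto _ l (𝓝 f')).congr fun i => ?_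
  have : y i - x i ≠ 0 := sub_ne_zero.2 (hxy i).ne'
  simp only [slope_def_field]
  field_simp
  ring

lemma tendsto_zero_of_tendsto_sum_range {G : Type*} [AddCommGroup G] [TopologicalSpace G]
    [IsTopologicalAddGroup G] {e : ℕ → G} {d : G}
    (h : Tendsto (fun n => ∑ k ∈ range n, e k) atTop (𝓝 d)) : Tendsto e atTop (𝓝 0) := by
  simpa [Function.comp_def, sum_range_succ] using (h.comp (tendsto_add_atTop_nat 1)).sub h

/-- The blancmange function is continuous and nowhere differentiable. -/
theorem stmt8 : Continuous blanc ∧ ∀ t₀ : ℝ, ¬ DifferentiableAt ℝ blanc t₀ := by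
  refine ⟨continuous_blanc, fun t₀ hd => ?_⟩
  have hslope := hd.hasDerivAt.tendsto_slope_of_straddle (tendsto_dyadicLeft t₀)
    (tendsto_dyadicRight t₀) (dyadicLeft_le · t₀) (fun n => (lt_dyadicRight n t₀).le)
    (dyadicLeft_lt_dyadicRight · t₀)
  simp only [slope_blanc_dyadic] at hslope
  simpa using (tendsto_zero_of_tendsto_sum_range hslope).abs
end

section
/- Let p > 2 be an integer, s ∈ 𝒮_p and c ≥ 1 an integer. Then the generalized blancmange function B(s,c) is continuous on ℝ and nowhere differentiable: for every t₀ ∈ ℝ, B(s,c) is not differentiable at t₀. -/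
open Filter

/-- A generator `s ∈ 𝒮_p`: a continuous `1`-periodic function with `s 0 = 0`, affine on each
interval `[i/p, (i+1)/p]` for `0 ≤ i < p`, and nonzero at some interior grid point `i₀/p`. -/
def IsGenerator (p : ℕ) (s : ℝ → ℝ) : Prop :=
  Continuous s ∧ (∀ t : ℝ, s (t + 1) = s t) ∧ s 0 = 0 ∧
    (∀ i : ℕ, i < p → ∃ a q : ℝ,
      ∀ t ∈ Set.Icc ((i : ℝ) / p) (((i : ℝ) + 1) / p), s t = a * t + q) ∧
    (∃ i₀ : ℕ, 0 < i₀ ∧ i₀ < p ∧ s ((i₀ : ℝ) / p) ≠ 0)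

/-- `s_k(t) = s(b^k t)/b^k`. -/
noncomputable def genk (s : ℝ → ℝ) (b : ℕ) (k : ℕ) (t : ℝ) : ℝ :=
  s ((b : ℝ) ^ k * t) / (b : ℝ) ^ k

/-- Partial sums `B_n(t) = ∑_{k<n} s_k(t)`. -/
noncomputable def genBN (s : ℝ → ℝ) (b : ℕ) (n : ℕ) (t : ℝ) : ℝ :=
  ∑ k ∈ Finset.range n, genk s b k t

/-- The generalized blancmange function `B(s,c)(t) = ∑_{k=0}^∞ s(b^k t)/b^k`, `b = c·p`. -/
noncomputable def genB (s : ℝ → ℝ) (b : ℕ) (t : ℝ) : ℝ := ∑' k : ℕ, genk s b k t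

/-!
On the grid of mesh `1 / (p bⁿ)` the terms `s_k` with `k > n` vanish and those with `k ≤ n` are
affine on each grid interval, so the secant slope of `B` over the `m`-th interval is the sum over
`k ≤ n` of the slopes `gridSlope ⌊m / bᵏ⌋` of `s`. If `B` had a derivative `L` at `t`, the secant
slopes over the `b` subintervals of the level-`n` interval containing `t` would all tend to `L`.
Because `p ∣ b`, the slopes over the subintervals `b q + r` and `b q` differ by exactly
`gridSlope r - gridSlope 0`, so all slopes of `s` coincide; since they add up to
`p (s 1 - s 0) = 0`, they vanish, and `s` vanishes on `ℤ / p`, contradicting `s (i₀ / p) ≠ 0`.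
-/

open Topology Asymptotics

theorem HasDerivAt.tendsto_slope_of_abs_sub_le {ι : Type*} {l : Filter ι} {f : ℝ → ℝ}
    {f' x C : ℝ} {u v : ι → ℝ} (hf : HasDerivAt f f' x) (huv : ∀ i, u i < v i)
    (hlen : Tendsto (fun i => v i - u i) l (𝓝 0)) (hu : ∀ i, |u i - x| ≤ C * (v i - u i))
    (hv : ∀ i, |v i - x| ≤ C * (v i - u i)) :
    Tendsto (fun i => (f (v i) - f (u i)) / (v i - u i)) l (𝓝 f') := by
  have hlim : ∀ w : ι → ℝ, (∀ i, |w i - x| ≤ C * (v i - u i)) → Tendsto w l (𝓝 x) := by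
    intro w hw
    rw [tendsto_iff_norm_sub_tendsto_zero]
    exact squeeze_zero (fun i => norm_nonneg _) hw (by simpa using hlen.const_mul C)
  have hO : ∀ w : ι → ℝ, (∀ i, |w i - x| ≤ C * (v i - u i)) →
      (fun i => w i - x) =O[l] (fun i => v i - u i) := fun w hw =>
    IsBigO.of_bound C (Eventually.of_forall fun i => by
      rw [Real.norm_eq_abs, Real.norm_eq_abs, abs_of_pos (sub_pos.2 (huv i))]
      exact hw i)
  have ho := hasDerivAt_iff_isLittleO.mp hf
  have key : (fun i => f (v i) - f (u i) - (v i - u i) * f') =o[l] (fun i => v i - u i) :=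
    (((ho.comp_tendsto (hlim v hv)).trans_isBigO (hO v hv)).sub
      ((ho.comp_tendsto (hlim u hu)).trans_isBigO (hO u hu))).congr_left
      fun i => by simp only [Function.comp, smul_eq_mul]; ring
  have := key.tendsto_div_nhds_zero.add_const f'
  rw [zero_add] at this
  refine this.congr fun i => ?_
  have := (sub_pos.2 (huv i)).ne'
  field_simp
  ring

namespace Blancmange

variable {p b : ℕ} {s : ℝ → ℝ}

def IsAffineOnGrid (p : ℕ) (s : ℝ → ℝ) : Prop :=
  ∀ i : ℕ, i < p → ∃ a q : ℝ, ∀ t ∈ Set.Icc ((i : ℝ) / p) (((i : ℝ) + 1) / p), s t = a * t + q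

noncomputable def gridSlope (p : ℕ) (s : ℝ → ℝ) (m : ℤ) : ℝ :=
  p * (s ((m + 1) / p) - s (m / p))

lemma IsAffineOnGrid.exists_affine (haff : IsAffineOnGrid p s) (hp : 0 < p)
    (hper : Function.Periodic s 1) (e : ℤ) :
    ∃ a q : ℝ, ∀ t ∈ Set.Icc ((e : ℝ) / p) (((e : ℝ) + 1) / p), s t = a * t + q := by
  have hpz : (0 : ℤ) < p := by exact_mod_cast hp
  obtain ⟨a, q, hq⟩ := haff (e % p).toNat (by have := Int.emod_lt_of_pos e hpz; omega)
  have hi : (((e % p).toNat : ℕ) : ℝ) = e - p * (e / p : ℤ) := by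
    have h : ((e % p).toNat : ℤ) = e - p * (e / p) := by
      rw [Int.toNat_of_nonneg (Int.emod_nonneg e hpz.ne'), Int.emod_def]
    exact_mod_cast h
  rw [hi] at hq
  refine ⟨a, q - a * (e / p : ℤ), fun t ht => ?_⟩
  rw [← hper.sub_int_mul_eq (e / p), hq]
  · ring
  · have hpR : (0 : ℝ) < p := by exact_mod_cast hp
    obtain ⟨h1, h2⟩ := ht
    constructor
    · rw [sub_div, mul_div_cancel_left₀ _ hpR.ne']; linarith
    · rw [add_div, sub_div, mul_div_cancel_left₀ _ hpR.ne']; rw [add_div] at h2; linarith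

lemma IsAffineOnGrid.sub_eq_gridSlope_mul (haff : IsAffineOnGrid p s) (hp : 0 < p)
    (hper : Function.Periodic s 1) {e : ℤ} {u v : ℝ}
    (hu : u ∈ Set.Icc ((e : ℝ) / p) (((e : ℝ) + 1) / p))
    (hv : v ∈ Set.Icc ((e : ℝ) / p) (((e : ℝ) + 1) / p)) :
    s v - s u = gridSlope p s e * (v - u) := by
  obtain ⟨a, q, hq⟩ := haff.exists_affine hp hper e
  have hpR : (p : ℝ) ≠ 0 := by positivity
  have hl : (e : ℝ) / p ∈ Set.Icc ((e : ℝ) / p) (((e : ℝ) + 1) / p) :=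
    ⟨le_rfl, by gcongr; linarith⟩
  have hr : ((e : ℝ) + 1) / p ∈ Set.Icc ((e : ℝ) / p) (((e : ℝ) + 1) / p) :=
    ⟨by gcongr; linarith, le_rfl⟩
  rw [gridSlope, hq u hu, hq v hv, hq _ hl, hq _ hr]
  field_simp
  ring

lemma IsAffineOnGrid.sub_grid_eq_gridSlope_div (haff : IsAffineOnGrid p s) (hp : 0 < p)
    (hper : Function.Periodic s 1) {d : ℤ} (hd : 0 < d) (m : ℤ) :
    s ((m + 1) / (p * d)) - s (m / (p * d)) = gridSlope p s (m / d) / (p * d) := by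
  have hpR : (0 : ℝ) < p := by exact_mod_cast hp
  have hlo : ((m / d : ℤ) : ℝ) * d ≤ m := by exact_mod_cast Int.ediv_mul_le m hd.ne'
  have hhi : (m : ℝ) + 1 ≤ (((m / d : ℤ) : ℝ) + 1) * d := by
    exact_mod_cast Int.lt_ediv_add_one_mul_self m hd
  have mem : ∀ x : ℝ, (m : ℝ) ≤ x → x ≤ m + 1 →
      x / (p * d) ∈ Set.Icc (((m / d : ℤ) : ℝ) / p) ((((m / d : ℤ) : ℝ) + 1) / p) := by
    intro x h1 h2
    constructor
    · rw [div_le_div_iff₀ hpR (by positivity)]; nlinarith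
    · rw [div_le_div_iff₀ (by positivity) hpR]; nlinarith
  rw [haff.sub_eq_gridSlope_mul hp hper (mem _ le_rfl (by linarith)) (mem _ (by linarith) le_rfl)]
  field_simp
  ring

noncomputable def levelSlope (p : ℕ) (s : ℝ → ℝ) (b n : ℕ) (m : ℤ) : ℝ :=
  ∑ k ∈ Finset.range (n + 1), gridSlope p s (m / (b : ℤ) ^ k)

lemma genB_grid_eq_sum (hpb : p ∣ b) (hb : 0 < b) (hper : Function.Periodic s 1) (h0 : s 0 = 0)
    (n : ℕ) (x : ℤ) :
    genB s b (x / (p * b ^ n)) = ∑ k ∈ Finset.range (n + 1), genk s b k (x / (p * b ^ n)) := by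
  refine tsum_eq_sum fun k hk => ?_
  obtain ⟨c, rfl⟩ := hpb
  have hp : (p : ℝ) ≠ 0 := by have := Nat.pos_of_mul_pos_right hb; positivity
  have hc : (c : ℝ) ≠ 0 := by have := Nat.pos_of_mul_pos_left hb; positivity
  obtain ⟨j, rfl⟩ : ∃ j, k = n + 1 + j := ⟨k - (n + 1), by rw [Finset.mem_range] at hk; omega⟩
  have hint : ((p * c : ℕ) : ℝ) ^ (n + 1 + j) * (x / (p * ((p * c : ℕ) : ℝ) ^ n)) =
      ((x * c * ((p * c : ℕ) : ℤ) ^ j : ℤ) : ℝ) * 1 := by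
    push_cast
    field_simp
    ring
  rw [genk, hint, hper.int_mul_eq, h0, zero_div]

lemma genB_sub_grid (hp : 0 < p) (hpb : p ∣ b) (hb : 0 < b) (hper : Function.Periodic s 1)
    (haff : IsAffineOnGrid p s) (h0 : s 0 = 0) (n : ℕ) (m : ℤ) :
    genB s b ((m + 1) / (p * b ^ n)) - genB s b (m / (p * b ^ n)) =
      levelSlope p s b n m / (p * b ^ n) := by
  have h1 := genB_grid_eq_sum hpb hb hper h0 n (m + 1)
  push_cast at h1
  rw [h1, genB_grid_eq_sum hpb hb hper h0, ← Finset.sum_sub_distrib, levelSlope,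
    Finset.sum_div]
  conv_rhs => rw [← Finset.sum_range_reflect]
  refine Finset.sum_congr rfl fun k hk => ?_
  have hk : k ≤ n := Nat.lt_succ_iff.mp (Finset.mem_range.mp hk)
  have hpow : (b : ℝ) ^ n = b ^ k * b ^ (n - k) := by rw [← pow_add, Nat.add_sub_cancel' hk]
  have hd : (0 : ℤ) < (b : ℤ) ^ (n - k) := by positivity
  have key := haff.sub_grid_eq_gridSlope_div hp hper hd m
  push_cast at key
  have hscale : ∀ x : ℝ, (b : ℝ) ^ k * (x / (p * b ^ n)) = x / (p * b ^ (n - k)) := by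
    intro x
    rw [hpow]
    field_simp
  rw [show n + 1 - 1 - k = n - k by omega, genk, genk, ← sub_div, hscale, hscale, key, hpow]
  field_simp

lemma levelSlope_succ (n : ℕ) (m : ℤ) :
    levelSlope p s b (n + 1) m = gridSlope p s m + levelSlope p s b n (m / b) := by
  rw [levelSlope, Finset.sum_range_succ', pow_zero, Int.ediv_one, add_comm, levelSlope]
  congr 1
  refine Finset.sum_congr rfl fun k _ => ?_
  rw [Int.ediv_ediv_of_nonneg (by positivity), pow_succ']

lemma gridSlope_add_of_dvd (hper : Function.Periodic s 1) {z : ℤ} (hz : (p : ℤ) ∣ z) (m : ℤ) :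
    gridSlope p s (z + m) = gridSlope p s m := by
  obtain ⟨w, rfl⟩ := hz
  rcases eq_or_ne (p : ℝ) 0 with hp | hp
  · simp [gridSlope, hp]
  have shift : ∀ x : ℝ, s ((p * w + x) / p) = s (x / p) := fun x => by
    rw [add_div, mul_div_cancel_left₀ _ hp, add_comm, ← mul_one (w : ℝ), hper.int_mul w]
  simp only [gridSlope, Int.cast_add, Int.cast_mul, Int.cast_natCast, add_assoc, shift]

lemma levelSlope_mul_add_succ (hper : Function.Periodic s 1) (hpb : p ∣ b) {r : ℕ} (hr : r < b)
    (n : ℕ) (q : ℤ) :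
    levelSlope p s b (n + 1) (b * q + r) = gridSlope p s r + levelSlope p s b n q := by
  have hb : (b : ℤ) ≠ 0 := by omega
  rw [levelSlope_succ, gridSlope_add_of_dvd hper ((Int.natCast_dvd_natCast.mpr hpb).mul_right q),
    Int.mul_add_ediv_left _ _ hb, Int.ediv_eq_zero_of_lt (by positivity) (by omega), add_zero]

lemma tendsto_levelSlope (hp : 0 < p) (hpb : p ∣ b) (hb : 1 < b) (hper : Function.Periodic s 1)
    (haff : IsAffineOnGrid p s) (h0 : s 0 = 0) {L t : ℝ}
    (hd : HasDerivAt (genB s b) L t) {r : ℕ} (hr : r < b) :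
    Tendsto (fun n => levelSlope p s b (n + 1) (b * ⌊t * (p * b ^ n)⌋ + r)) atTop (𝓝 L) := by
  have hbR : (1 : ℝ) < b := by exact_mod_cast hb
  have hrb : (r : ℝ) + 1 ≤ b := by exact_mod_cast hr
  set P : ℕ → ℝ := fun n => p * b ^ n
  have hP : ∀ n, 0 < P n := fun n => by positivity
  set q : ℕ → ℤ := fun n => ⌊t * P n⌋
  -- `t` lies in the level-`n` interval `[q n / P n, q n / P n + b h]`; we use its `r`-th
  -- subinterval `[q n / P n + r h, q n / P n + (r + 1) h]`, the level-`n+1` interval `b q n + r`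
  set h : ℕ → ℝ := fun n => 1 / P (n + 1)
  have hh : ∀ n, 0 < h n := fun n => by positivity
  have hbh : ∀ n, b * h n = 1 / P n := fun n => by
    simp only [h, P, pow_succ]; field_simp
  have ht : ∀ n, q n / P n ≤ t ∧ t ≤ q n / P n + b * h n := fun n => by
    rw [hbh, ← add_div, div_le_iff₀ (hP n), le_div_iff₀ (hP n)]
    exact ⟨Int.floor_le _, (Int.lt_floor_add_one _).le⟩
  have hend : ∀ n (x : ℝ), (b * q n + x) / P (n + 1) = q n / P n + x * h n := fun n x => by
    simp only [h, P, pow_succ]; field_simp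
  have hlim := hd.tendsto_slope_of_abs_sub_le (l := atTop) (C := b)
    (u := fun n => q n / P n + r * h n) (v := fun n => q n / P n + (r + 1) * h n)
    (fun n => by nlinarith [hh n]) ?_
    (fun n => abs_sub_le_iff.2 ⟨by nlinarith [hh n, ht n], by nlinarith [hh n, ht n]⟩)
    (fun n => abs_sub_le_iff.2 ⟨by nlinarith [hh n, ht n], by nlinarith [hh n, ht n]⟩)
  · refine hlim.congr fun n => ?_
    have := genB_sub_grid hp hpb (by omega) hper haff h0 (n + 1) (b * q n + r)
    push_cast at this
    rw [← hend, ← hend, ← add_assoc]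
    simp only [P] at this ⊢
    rw [this, ← sub_div, add_sub_cancel_left, div_div_div_cancel_right₀
      (hP _).ne', div_one]
  · have hgeom := (tendsto_pow_atTop_nhds_zero_of_lt_one (by positivity)
      (inv_lt_one_of_one_lt₀ hbR)).const_mul ((p : ℝ) * b)⁻¹
    rw [mul_zero] at hgeom
    refine hgeom.congr fun n => ?_
    simp only [h, P, inv_pow]
    field_simp
    ring

lemma eq_zero_at_grid_of_gridSlope_eq (hp : 0 < p) (hper : Function.Periodic s 1) (h0 : s 0 = 0)
    (hconst : ∀ i : ℕ, i < p → gridSlope p s i = gridSlope p s 0) {i : ℕ} (hi : i ≤ p) :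
    s (i / p) = 0 := by
  have hpR : (p : ℝ) ≠ 0 := by positivity
  have linear : ∀ i : ℕ, i ≤ p → s (i / p) = i * gridSlope p s 0 / p := by
    intro i
    induction i with
    | zero => simp [h0]
    | succ i ih =>
      intro hle
      have h := hconst i (by omega)
      rw [gridSlope] at h
      push_cast at h ⊢
      rw [ih (by omega)] at h
      field_simp at h ⊢
      linarith
  have hzero : gridSlope p s 0 = 0 := by
    have h := linear p le_rfl
    rw [div_self hpR, hper.eq, h0, mul_div_cancel_left₀ _ hpR] at h
    exact h.symm
  rw [linear i hi, hzero, mul_zero, zero_div]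

lemma continuous_genB (hcont : Continuous s) (hper : Function.Periodic s 1) (hb : 1 < b) :
    Continuous (genB s b) := by
  have hbR : (1 : ℝ) < b := by exact_mod_cast hb
  obtain ⟨M, hM⟩ := isBounded_iff_forall_norm_le.mp (hper.isBounded_of_continuous one_ne_zero hcont)
  refine continuous_tsum (u := fun k => M * (b : ℝ)⁻¹ ^ k)
    (fun k => (hcont.comp (continuous_const_mul _)).div_const _)
    ((summable_geometric_of_lt_one (by positivity) (inv_lt_one_of_one_lt₀ hbR)).mul_left M)
    fun k t => ?_
  rw [genk, norm_div, norm_pow, Real.norm_natCast, inv_pow, ← div_eq_mul_inv]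
  gcongr
  exact hM _ (Set.mem_range_self _)

lemma not_differentiableAt_genB (hp : 0 < p) (hpb : p ∣ b) (hb : 1 < b)
    (hper : Function.Periodic s 1) (haff : IsAffineOnGrid p s) (h0 : s 0 = 0)
    {i₀ : ℕ} (hi₀ : i₀ < p) (hs : s (i₀ / p) ≠ 0) (t : ℝ) :
    ¬ DifferentiableAt ℝ (genB s b) t := by
  intro hd
  refine hs (eq_zero_at_grid_of_gridSlope_eq hp hper h0 (fun r hr => ?_) hi₀.le)
  have hrb : r < b := hr.trans_le (Nat.le_of_dvd (by omega) hpb)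
  have h := (tendsto_levelSlope hp hpb hb hper haff h0 hd.hasDerivAt hrb).sub
    (tendsto_levelSlope hp hpb hb hper haff h0 hd.hasDerivAt (r := 0) (by omega))
  simp only [levelSlope_mul_add_succ hper hpb hrb, levelSlope_mul_add_succ hper hpb (r := 0)
    (by omega), add_sub_add_right_eq_sub, sub_self, tendsto_const_nhds_iff] at h
  exact_mod_cast sub_eq_zero.mp h

end Blancmange

open Blancmange in
theorem stmt13_general (p : ℕ) (s : ℝ → ℝ) (hs : IsGenerator p s)
    (c : ℕ) (hc : 1 ≤ c) :
    Continuous (genB s (c * p)) ∧ ∀ t₀ : ℝ, ¬ DifferentiableAt ℝ (genB s (c * p)) t₀ := by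
  obtain ⟨hcont, hper, h0, haff, i₀, hi₀, hi₀p, hs₀⟩ := hs
  have hb : 1 < c * p := by nlinarith
  exact ⟨continuous_genB hcont hper hb,
    not_differentiableAt_genB (by omega) (dvd_mul_left p c) hb hper haff h0 hi₀p hs₀⟩

/-- For `p > 2`, the generalized blancmange function `B(s,c)` (with `b = c·p`) is continuous
and nowhere differentiable. -/
theorem stmt13 (p : ℕ) (hp : 2 < p) (s : ℝ → ℝ) (hs : IsGenerator p s)
    (c : ℕ) (hc : 1 ≤ c) :
    Continuous (genB s (c * p)) ∧ ∀ t₀ : ℝ, ¬ DifferentiableAt ℝ (genB s (c * p)) t₀ :=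
  stmt13_general p s hs c hc
end

section
/- The family 𝓑 of generalized blancmange functions, restricted to [0,1], is dense in C⁰ with respect to the supremum norm: for every continuous function f : [0,1] → ℝ with f(0) = f(1) = 0 and every ε > 0, there exist an integer p ≥ 2, a generator s ∈ 𝒮_p and an integer c ≥ 1 such that sup_{t ∈ [0,1]} |f(t) − B(s,c)(t)| < ε. -/
open Filter

/-
Interpolate `f` linearly between its values at the grid points `j / p`, with `p` so large that `f`
varies by less than `ε / 2` on each cell, and extend the interpolant `1`-periodically; it is a
generator once its value at `1 / p` is nudged away from `0`. Its blancmange sum differs from it by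
at most `sup |s| / (b - 1)`, which is small once `b = c p` is large.
-/

noncomputable def ramp (x : ℝ) : ℝ := max 0 (min 1 x)

lemma continuous_ramp : Continuous ramp :=
  continuous_const.max (continuous_const.min continuous_id)

lemma ramp_of_nonpos {x : ℝ} (hx : x ≤ 0) : ramp x = 0 := by
  simp [ramp, min_le_of_right_le hx]

lemma ramp_of_one_le {x : ℝ} (hx : 1 ≤ x) : ramp x = 1 := by
  simp [ramp, hx]

lemma ramp_of_mem_Icc {x : ℝ} (h0 : 0 ≤ x) (h1 : x ≤ 1) : ramp x = x := by
  simp [ramp, h0, h1]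

/-- The piecewise linear function with value `v j` at `j / p` for `j ≤ p`. -/
noncomputable def pwLinear (p : ℕ) (v : ℕ → ℝ) (t : ℝ) : ℝ :=
  v 0 + ∑ j ∈ Finset.range p, (v (j + 1) - v j) * ramp (p * t - j)

section pwLinear

variable {p : ℕ} {v : ℕ → ℝ}

lemma continuous_pwLinear : Continuous (pwLinear p v) :=
  continuous_const.add <| continuous_finsetSum _ fun _ _ =>
    continuous_const.mul <| continuous_ramp.comp <|
      (continuous_const.mul continuous_id).sub continuous_const

lemma pwLinear_eq_of_mem_Icc {i : ℕ} (hi : i < p) {t : ℝ}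
    (ht : t ∈ Set.Icc ((i : ℝ) / p) ((i + 1) / p)) :
    pwLinear p v t = v i + (v (i + 1) - v i) * (p * t - i) := by
  have hp : (0 : ℝ) < p := by exact_mod_cast Nat.zero_lt_of_lt hi
  have hlo : (i : ℝ) ≤ p * t := by rw [← div_le_iff₀' hp]; exact ht.1
  have hhi : p * t ≤ i + 1 := by rw [← le_div_iff₀' hp]; exact ht.2
  have below : ∀ j ∈ Finset.range i, (v (j + 1) - v j) * ramp (p * t - j) = v (j + 1) - v j := by
    intro j hj
    have : (j : ℝ) + 1 ≤ i := by exact_mod_cast Finset.mem_range.mp hj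
    rw [ramp_of_one_le (by linarith), mul_one]
  have above : ∀ j ∈ Finset.Ico (i + 1) p, (v (j + 1) - v j) * ramp (p * t - j) = 0 := by
    intro j hj
    have : (i : ℝ) + 1 ≤ j := by exact_mod_cast (Finset.mem_Ico.mp hj).1
    rw [ramp_of_nonpos (by linarith), mul_zero]
  rw [pwLinear, ← Finset.sum_range_add_sum_Ico _ hi, Finset.sum_range_succ,
    Finset.sum_congr rfl below, Finset.sum_eq_zero above, Finset.sum_range_sub,
    ramp_of_mem_Icc (by linarith) (by linarith)]
  ring

lemma pwLinear_natCast_div {i : ℕ} (hi : i < p) : pwLinear p v (i / p) = v i := by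
  have hp : (p : ℝ) ≠ 0 := by exact_mod_cast (Nat.zero_lt_of_lt hi).ne'
  rw [pwLinear_eq_of_mem_Icc hi ⟨le_rfl, by gcongr; linarith⟩, mul_div_cancel₀ _ hp]
  ring

lemma pwLinear_zero (hp : 0 < p) : pwLinear p v 0 = v 0 := by
  simpa using pwLinear_natCast_div (v := v) hp

lemma pwLinear_one (hp : 0 < p) : pwLinear p v 1 = v p := by
  obtain ⟨n, rfl⟩ := Nat.exists_eq_add_one_of_ne_zero hp.ne'
  have hn : (0 : ℝ) < n + 1 := by positivity
  rw [pwLinear_eq_of_mem_Icc (Nat.lt_succ_self n) ⟨?_, ?_⟩] <;> push_cast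
  · ring
  · rw [div_le_one hn]; linarith
  · rw [div_self hn.ne']

lemma abs_sub_add_mul_le_max {y a b l : ℝ} (h0 : 0 ≤ l) (h1 : l ≤ 1) :
    |y - (a + (b - a) * l)| ≤ max |y - a| |y - b| :=
  calc |y - (a + (b - a) * l)| = |(1 - l) * (y - a) + l * (y - b)| := by ring_nf
    _ ≤ (1 - l) * |y - a| + l * |y - b| := by
      refine (abs_add_le _ _).trans_eq ?_
      rw [abs_mul, abs_mul, abs_of_nonneg (sub_nonneg.mpr h1), abs_of_nonneg h0]
    _ ≤ (1 - l) * max |y - a| |y - b| + l * max |y - a| |y - b| := by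
      have : 0 ≤ 1 - l := sub_nonneg.mpr h1
      gcongr
      · exact le_max_left _ _
      · exact le_max_right _ _
    _ = max |y - a| |y - b| := by ring

lemma abs_sub_pwLinear_le {i : ℕ} (hi : i < p) {t : ℝ}
    (ht : t ∈ Set.Icc ((i : ℝ) / p) ((i + 1) / p)) (y : ℝ) :
    |y - pwLinear p v t| ≤ max |y - v i| |y - v (i + 1)| := by
  have hp : (0 : ℝ) < p := by exact_mod_cast Nat.zero_lt_of_lt hi
  rw [pwLinear_eq_of_mem_Icc hi ht]
  refine abs_sub_add_mul_le_max ?_ ?_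
  · rw [sub_nonneg, ← div_le_iff₀' hp]; exact ht.1
  · rw [sub_le_iff_le_add', ← le_div_iff₀' hp]; exact ht.2

lemma pwLinear_comp_fract_of_mem_Icc (hp : 0 < p) (hv : v 0 = v p) {t : ℝ}
    (ht : t ∈ Set.Icc (0 : ℝ) 1) : (pwLinear p v ∘ Int.fract) t = pwLinear p v t := by
  rcases ht.2.lt_or_eq with ht1 | rfl
  · rw [Function.comp_apply, Int.fract_eq_self.mpr ⟨ht.1, ht1⟩]
  · rw [Function.comp_apply, Int.fract_one, pwLinear_zero hp, pwLinear_one hp, hv]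

lemma isGenerator_pwLinear_comp_fract (hp : 2 ≤ p) (hv0 : v 0 = 0) (hvp : v p = 0)
    (hv1 : v 1 ≠ 0) : IsGenerator p (pwLinear p v ∘ Int.fract) := by
  have hp0 : 0 < p := by omega
  have hv : v 0 = v p := hv0.trans hvp.symm
  have hp' : (0 : ℝ) < p := by exact_mod_cast hp0
  refine ⟨continuous_pwLinear.continuousOn.comp_fract'' ?_, fun t => ?_, ?_,
    fun i hi => ⟨(v (i + 1) - v i) * p, v i - (v (i + 1) - v i) * i, fun t ht => ?_⟩,
    1, one_pos, hp, ?_⟩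
  · rw [pwLinear_zero hp0, pwLinear_one hp0, hv]
  · simp only [Function.comp_apply, Int.fract_add_one]
  · simp only [Function.comp_apply, Int.fract_zero, pwLinear_zero hp0, hv0]
  · have hi' : (i : ℝ) + 1 ≤ p := by exact_mod_cast hi
    have ht01 : t ∈ Set.Icc (0 : ℝ) 1 :=
      ⟨le_trans (by positivity) ht.1, ht.2.trans (by rwa [div_le_one hp'])⟩
    rw [pwLinear_comp_fract_of_mem_Icc hp0 hv ht01, pwLinear_eq_of_mem_Icc hi ht]
    ring
  · have h1 : ((1 : ℕ) : ℝ) / p ∈ Set.Icc (0 : ℝ) 1 :=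
      ⟨by positivity, by rw [div_le_one hp']; exact_mod_cast hp0⟩
    rwa [pwLinear_comp_fract_of_mem_Icc hp0 hv h1, pwLinear_natCast_div (by omega)]

end pwLinear

lemma exists_mem_Icc_natCast_div {p : ℕ} (hp : 0 < p) {t : ℝ} (ht : t ∈ Set.Icc (0 : ℝ) 1) :
    ∃ i < p, t ∈ Set.Icc ((i : ℝ) / p) ((i + 1) / p) := by
  have hp' : (0 : ℝ) < p := by exact_mod_cast hp
  rcases ht.2.lt_or_eq with ht1 | rfl
  · have hpt : 0 ≤ p * t := mul_nonneg hp'.le ht.1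
    refine ⟨⌊p * t⌋₊, (Nat.floor_lt hpt).mpr (by nlinarith), ?_, ?_⟩
    · rw [div_le_iff₀' hp']; exact Nat.floor_le hpt
    · rw [le_div_iff₀' hp']; exact (Nat.lt_floor_add_one _).le
  · obtain ⟨n, rfl⟩ := Nat.exists_eq_add_one_of_ne_zero hp.ne'
    have hn : (0 : ℝ) < n + 1 := by positivity
    refine ⟨n, Nat.lt_succ_self n, ?_, ?_⟩ <;> push_cast
    · rw [div_le_one hn]; linarith
    · rw [div_self hn.ne']

theorem exists_isGenerator_abs_sub_lt {f : ℝ → ℝ} (hf : ContinuousOn f (Set.Icc 0 1))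
    (hf0 : f 0 = 0) (hf1 : f 1 = 0) {ε : ℝ} (hε : 0 < ε) :
    ∃ p, 2 ≤ p ∧ ∃ s, IsGenerator p s ∧ ∀ t ∈ Set.Icc (0 : ℝ) 1, |f t - s t| < ε := by
  obtain ⟨δ, hδ, hfδ⟩ := Metric.uniformContinuousOn_iff.mp
    (isCompact_Icc.uniformContinuousOn_of_continuous hf) (ε / 2) (half_pos hε)
  obtain ⟨p, hpδ⟩ := exists_nat_gt (max 2 δ⁻¹)
  have hp : 2 ≤ p := by exact_mod_cast (le_max_left _ _).trans hpδ.le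
  have hp0 : 0 < p := by omega
  have hp' : (0 : ℝ) < p := by positivity
  have hmesh : 1 / (p : ℝ) < δ := by
    rw [div_lt_iff₀ hp', ← div_lt_iff₀' hδ, one_div]; exact (le_max_right _ _).trans_lt hpδ
  -- the value at `1 / p` is nudged so that the interpolant is nonzero at an interior grid point
  obtain ⟨w, hw0, hw⟩ := (dense_compl_singleton (0 : ℝ)).exists_dist_lt (f (1 / p)) (half_pos hε)
  set v : ℕ → ℝ := Function.update (fun j => f (j / p)) 1 w with hv
  have hvf : ∀ j : ℕ, |f (j / p) - v j| < ε / 2 := by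
    intro j
    rcases eq_or_ne j 1 with rfl | hj
    · simpa [hv, ← Real.dist_eq] using hw
    · simpa [hv, hj] using half_pos hε
  have hv0 : v 0 = 0 := by simp [hv, hf0]
  have hvp : v p = 0 := by simp [hv, show p ≠ 1 by omega, hp'.ne', hf1]
  have hv1 : v 1 ≠ 0 := by simpa [hv] using hw0
  refine ⟨p, hp, _, isGenerator_pwLinear_comp_fract hp hv0 hvp hv1, fun t ht => ?_⟩
  have near : ∀ j : ℕ, j ≤ p → |t - j / p| ≤ 1 / p → |f t - v j| < ε := fun j hj htj =>
    have hj' : (j : ℝ) / p ∈ Set.Icc (0 : ℝ) 1 :=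
      ⟨by positivity, by rw [div_le_one hp']; exact_mod_cast hj⟩
    calc |f t - v j| ≤ |f t - f (j / p)| + |f (j / p) - v j| := abs_sub_le _ _ _
      _ < ε / 2 + ε / 2 := add_lt_add (hfδ t ht _ hj' (by rw [Real.dist_eq]; linarith)) (hvf j)
      _ = ε := add_halves ε
  obtain ⟨i, hi, hti⟩ := exists_mem_Icc_natCast_div hp0 ht
  have hcell : ((i : ℝ) + 1) / p - i / p = 1 / p := by ring
  rw [pwLinear_comp_fract_of_mem_Icc hp0 (hv0.trans hvp.symm) ht]
  refine (abs_sub_pwLinear_le hi hti _).trans_lt (max_lt (near i hi.le ?_) (near (i + 1) hi ?_))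
  · rw [abs_of_nonneg (by linarith [hti.1])]; linarith [hti.2]
  · push_cast; rw [abs_of_nonpos (by linarith [hti.2])]; linarith [hti.1]

lemma IsGenerator.exists_abs_le {p : ℕ} {s : ℝ → ℝ} (hs : IsGenerator p s) :
    ∃ M, ∀ x, |s x| ≤ M := by
  obtain ⟨M, hM⟩ := (Function.Periodic.isBounded_of_continuous (c := 1) hs.2.1 one_ne_zero
    hs.1).exists_norm_le
  exact ⟨M, fun x => hM _ (Set.mem_range_self x)⟩

lemma abs_genB_sub_le {s : ℝ → ℝ} {M : ℝ} (hM : ∀ x, |s x| ≤ M) {b : ℕ} (hb : 2 ≤ b) (t : ℝ) :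
    |genB s b t - s t| ≤ M / (b - 1) := by
  have hb1 : (1 : ℝ) < b := by exact_mod_cast hb
  have hr0 : (0 : ℝ) ≤ (b : ℝ)⁻¹ := by positivity
  have hr1 : (b : ℝ)⁻¹ < 1 := inv_lt_one_of_one_lt₀ hb1
  have hbound : ∀ k, ‖genk s b k t‖ ≤ M * (b : ℝ)⁻¹ ^ k := fun k => by
    rw [genk, Real.norm_eq_abs, abs_div, abs_of_pos (pow_pos (by positivity : (0 : ℝ) < b) k), inv_pow, ← div_eq_mul_inv]
    exact div_le_div_of_nonneg_right (hM _) (by positivity)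
  have hsum : Summable (genk s b · t) :=
    .of_norm_bounded ((summable_geometric_of_lt_one hr0 hr1).mul_left M) hbound
  have htail : HasSum (fun k => M * (b : ℝ)⁻¹ ^ (k + 1)) (M / (b - 1)) := by
    have hgeom := (hasSum_geometric_of_lt_one hr0 hr1).mul_left (M * (b : ℝ)⁻¹)
    rw [show M * (b : ℝ)⁻¹ * (1 - (b : ℝ)⁻¹)⁻¹ = M / (b - 1) by field_simp] at hgeom
    exact hgeom.congr_fun fun k => by ring
  rw [genB, hsum.tsum_eq_zero_add, genk, pow_zero, one_mul, div_one, add_sub_cancel_left]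
  exact tsum_of_norm_bounded htail fun k => hbound (k + 1)

lemma exists_abs_genB_sub_lt {s : ℝ → ℝ} {M : ℝ} (hM : ∀ x, |s x| ≤ M) {p : ℕ} (hp : 1 ≤ p)
    {η : ℝ} (hη : 0 < η) : ∃ c : ℕ, 1 ≤ c ∧ ∀ t, |genB s (c * p) t - s t| < η := by
  obtain ⟨n, hn⟩ := exists_nat_gt (M / η)
  have hb : (n : ℝ) + 1 ≤ ((n + 2) * p : ℕ) - 1 := by
    have : (1 : ℝ) ≤ p := by exact_mod_cast hp
    push_cast; nlinarith
  refine ⟨n + 2, by omega, fun t => (abs_genB_sub_le hM (by nlinarith) t).trans_lt ?_⟩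
  rw [div_lt_iff₀ (by linarith), ← div_lt_iff₀' hη]
  linarith

/-- The family `𝓑` of generalized blancmange functions is dense, for the supremum norm, in
the space of continuous functions `f : [0,1] → ℝ` with `f 0 = f 1 = 0`. -/
theorem stmt16 (f : ℝ → ℝ) (hf : ContinuousOn f (Set.Icc (0 : ℝ) 1))
    (hf0 : f 0 = 0) (hf1 : f 1 = 0) (ε : ℝ) (hε : 0 < ε) :
    ∃ (p : ℕ) (s : ℝ → ℝ) (c : ℕ), 2 ≤ p ∧ IsGenerator p s ∧ 1 ≤ c ∧
      ∀ t ∈ Set.Icc (0 : ℝ) 1, |f t - genB s (c * p) t| < ε := by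
  obtain ⟨p, hp, s, hs, hfs⟩ := exists_isGenerator_abs_sub_lt hf hf0 hf1 (half_pos hε)
  obtain ⟨M, hM⟩ := hs.exists_abs_le
  obtain ⟨c, hc, hsB⟩ := exists_abs_genB_sub_lt hM (by omega : 1 ≤ p) (half_pos hε)
  refine ⟨p, s, c, hp, hs, hc, fun t ht => ?_⟩
  calc |f t - genB s (c * p) t| ≤ |f t - s t| + |s t - genB s (c * p) t| := abs_sub_le _ _ _
    _ = |f t - s t| + |genB s (c * p) t - s t| := by rw [abs_sub_comm (s t)]
    _ < ε / 2 + ε / 2 := add_lt_add (hfs t ht) (hsB t)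
    _ = ε := add_halves ε
end
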